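/- arXiv:0712.3954 — 2 statements merged into one kernel-verified Lean document; each statement's English description precedes it below -/
import Mathlib

section
/- Let r ≥ 1 be an integer, k ≥ 1, let p_1, …, p_k be positive integers, and let α be a positive rational number such that ∑_{i=1}^k 1/p_i + 1/α = 1/r and α ≥ max{p_1, …, p_k}. Then α ≤ u_{k+1}(r) − 1 and p_1·p_2⋯p_k·(α + 1) ≤ u_1(r)·u_2(r)⋯u_{k+1}(r). -/
/-!
Collect the `p_i` in a multiset `s` and put `U n = u_1 ⋯ u_n`, so that `U (n + 1) = U n (r U n + 1)`.
The bound `∏ s · (α + 1) ≤ U (|s| + 1)` is proved by strong induction on `∑ s`.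
If some `x ∈ s` has `α < x (x - 1)`, then `1/(x - 1) = 1/x + 1/(x (x - 1))` lets us replace `x`
by `x - 1` and enlarge `α`, and this only increases `∏ s · (α + 1)`.
Otherwise the largest part `c` satisfies `c (c - 1) ≤ α`: a single `c` is absorbed into `α`,
and a repeated pair `c, c` is replaced by one `c - 1`. In both cases the induction hypothesis bounds
the remaining product by `U |s|`, and since `r L / α` is a positive integer whenever `L` is a common
multiple of `s`, we get `α ≤ r L`, which closes the step.
Finally `α (α + 1) ≤ r ∏ s (α + 1) ≤ r U (k + 1)` gives `α ≤ r U k = u_{k+1} - 1`.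
-/

open Finset

/-- `sylvesterProd r n = u_1(r) ⋯ u_n(r)`. -/
def sylvesterProd (r : ℚ) : ℕ → ℚ
  | 0 => 1
  | n + 1 => sylvesterProd r n * (r * sylvesterProd r n + 1)

lemma sylvesterProd_succ (r : ℚ) (n : ℕ) :
    sylvesterProd r (n + 1) = sylvesterProd r n * (r * sylvesterProd r n + 1) := rfl

lemma one_le_sylvesterProd {r : ℚ} (hr : 0 ≤ r) : ∀ n, 1 ≤ sylvesterProd r n
  | 0 => le_rfl
  | n + 1 => by
    have h := one_le_sylvesterProd hr n
    exact one_le_mul_of_one_le_of_one_le h (by nlinarith)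

lemma prod_Icc_eq_sylvesterProd {r : ℤ} {u : ℕ → ℤ} (hu1 : u 1 = r + 1)
    (hu : ∀ j, 1 ≤ j → u (j + 1) = r * (∏ i ∈ Icc 1 j, u i) + 1) :
    ∀ j, ∏ i ∈ Icc 1 j, (u i : ℚ) = sylvesterProd r j
  | 0 => by simp [sylvesterProd]
  | 1 => by simp [hu1, sylvesterProd]
  | j + 2 => by
    have ih := prod_Icc_eq_sylvesterProd hu1 hu (j + 1)
    rw [prod_Icc_succ_top (by omega), ih, hu _ (by omega), Int.cast_add, Int.cast_mul,
      Int.cast_prod, ih, Int.cast_one]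
    rfl

section OrderedField

variable {K : Type*} [Field K] [LinearOrder K] [IsStrictOrderedRing K]

lemma mul_mul_add_one_le_mul_mul_add_one {r a b : K} (hr : 0 ≤ r) (ha : 0 ≤ a) (hab : a ≤ b) :
    a * (r * a + 1) ≤ b * (r * b + 1) := by
  have hb := ha.trans hab
  gcongr

lemma mul_add_one_le_pred_mul {x α : K} (hx : 0 < x) (hxα : x ≤ α) (hα : α < x * (x - 1)) :
    x * (α + 1) ≤ (x - 1) * (α * (x * (x - 1)) / (x * (x - 1) - α) + 1) := by
  have hpos : 0 < x * (x - 1) - α := sub_pos.2 hα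
  rw [div_add_one hpos.ne', mul_div_assoc', le_div_iff₀ hpos]
  nlinarith [mul_nonneg (mul_nonneg (hx.le.trans hxα) hx.le) (sub_nonneg.2 hxα),
    mul_nonneg hx.le (sub_nonneg.2 hxα)]

lemma sq_mul_mul_add_one_le {r c Q U α : K} (hr : 1 ≤ r) (hc : 3 ≤ c) (hQ : 1 ≤ Q)
    (hQU : (c ^ 2 - 1) * Q ≤ U) (hα : α ≤ r * c * Q) :
    c ^ 2 * Q * (α + 1) ≤ U * (r * U + 1) := by
  have hgap : 1 ≤ r * Q * ((c ^ 2 - 1) ^ 2 - c ^ 3) := by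
    have : 1 ≤ (c ^ 2 - 1) ^ 2 - c ^ 3 := by nlinarith
    nlinarith [one_le_mul_of_one_le_of_one_le hr hQ]
  calc c ^ 2 * Q * (α + 1) ≤ c ^ 2 * Q * (r * c * Q + 1) := by gcongr
    _ ≤ (c ^ 2 - 1) * Q * (r * ((c ^ 2 - 1) * Q) + 1) := by nlinarith
    _ ≤ U * (r * U + 1) :=
      mul_mul_add_one_le_mul_mul_add_one (by linarith) (mul_nonneg (by nlinarith) (by linarith)) hQU

end OrderedField

lemma sum_map_inv_nonneg {s : Multiset ℤ} (hs : ∀ x ∈ s, 0 ≤ x) :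
    0 ≤ (s.map fun x : ℤ => (x : ℚ)⁻¹).sum :=
  Multiset.sum_nonneg <| by
    simp only [Multiset.mem_map]
    rintro _ ⟨x, hx, rfl⟩
    have := hs x hx
    positivity

lemma le_mul_of_sum_inv_add_inv_eq {s : Multiset ℤ} {r L : ℤ} {α : ℚ} (hr : 0 < r) (hL : 0 < L)
    (hdvd : ∀ x ∈ s, x ∣ L) (hα : 0 < α)
    (h : (s.map fun x : ℤ => (x : ℚ)⁻¹).sum + α⁻¹ = (r : ℚ)⁻¹) : α ≤ r * L := by
  have hsum : (s.map fun x : ℤ => (x : ℚ)⁻¹).sum * L = ((s.map (L / ·)).sum : ℤ) := by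
    rw [Int.cast_multiset_sum, Multiset.map_map, ← Multiset.sum_map_mul_right]
    refine congrArg _ (Multiset.map_congr rfl fun x hx => ?_)
    have hx0 : (x : ℚ) ≠ 0 := by
      exact_mod_cast ne_zero_of_dvd_ne_zero hL.ne' (hdvd x hx)
    simp [Int.cast_div (hdvd x hx) hx0, div_eq_inv_mul]
  have hM : α⁻¹ * (r * L) = ((L - r * (s.map (L / ·)).sum : ℤ) : ℚ) := by
    rw [eq_sub_of_add_eq' h, Int.cast_sub, Int.cast_mul, ← hsum]
    field_simp
  have hM_pos : 0 < L - r * (s.map (L / ·)).sum := by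
    have : (0 : ℚ) < α⁻¹ * (r * L) := by positivity
    exact_mod_cast hM ▸ this
  have : 1 ≤ α⁻¹ * (r * L) := by
    rw [hM]; exact_mod_cast hM_pos
  rw [le_inv_mul_iff₀ hα, mul_one] at this
  exact_mod_cast this

structure IsKelloggTuple (r : ℤ) (s : Multiset ℤ) (α : ℚ) : Prop where
  pos : ∀ x ∈ s, 0 < x
  le : ∀ x ∈ s, (x : ℚ) ≤ α
  alpha_pos : 0 < α
  sum_inv : (s.map fun x : ℤ => (x : ℚ)⁻¹).sum + α⁻¹ = (r : ℚ)⁻¹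

namespace IsKelloggTuple

section Steps

variable {r : ℤ} {s t : Multiset ℤ} {α α' B : ℚ} {x c : ℤ}

lemma sum_nonneg (h : IsKelloggTuple r s α) : 0 ≤ s.sum :=
  Multiset.sum_nonneg fun x hx => (h.pos x hx).le

lemma eq_of_zero (h : IsKelloggTuple r 0 α) : α = r := by
  simpa using h.sum_inv

lemma head_pos (h : IsKelloggTuple r (x ::ₘ t) α) : 0 < x :=
  h.pos x (Multiset.mem_cons_self x t)

lemma tail (h : IsKelloggTuple r (x ::ₘ t) α) : ∀ y ∈ t, 0 < y ∧ (y : ℚ) ≤ α := fun y hy =>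
  ⟨h.pos y (Multiset.mem_cons_of_mem hy), h.le y (Multiset.mem_cons_of_mem hy)⟩

lemma sum_inv_cons (h : IsKelloggTuple r (x ::ₘ t) α) :
    (x : ℚ)⁻¹ + (t.map fun y : ℤ => (y : ℚ)⁻¹).sum + α⁻¹ = (r : ℚ)⁻¹ := by
  simpa [Multiset.map_cons, Multiset.sum_cons] using h.sum_inv

lemma two_mul_lt (h : IsKelloggTuple r (c ::ₘ c ::ₘ t) α) (hr : 0 < r) : 2 * r < c := by
  have hsum := h.sum_inv_cons
  have ht := sum_map_inv_nonneg fun y hy => (h.tail y (Multiset.mem_cons_of_mem hy)).1.le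
  have hα := inv_pos.2 h.alpha_pos
  simp only [Multiset.map_cons, Multiset.sum_cons] at hsum
  have hcq : (0 : ℚ) < c := by exact_mod_cast h.head_pos
  have hrq : (0 : ℚ) < r := by exact_mod_cast hr
  have : 2 / (c : ℚ) < 1 / r := by
    rw [div_eq_mul_inv, one_div]; linarith
  rw [div_lt_div_iff₀ hcq hrq] at this
  exact_mod_cast (by linarith : (2 : ℚ) * r < c)

lemma exists_pred_head (h : IsKelloggTuple r (x ::ₘ t) α) (hx : α < x * (x - 1)) :
    ∃ α', IsKelloggTuple r ((x - 1) ::ₘ t) α' ∧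
      (x : ℚ) * (α + 1) ≤ ((x - 1 : ℤ) : ℚ) * (α' + 1) := by
  have hsum := h.sum_inv_cons
  have hα := h.alpha_pos
  have hxα := h.le x (Multiset.mem_cons_self x t)
  have hx0 : (0 : ℚ) < x := by exact_mod_cast h.head_pos
  have hx1 : (1 : ℚ) < x - 1 := by nlinarith
  have hgap : 0 < (x : ℚ) * (x - 1) - α := sub_pos.2 hx
  have hle : α ≤ α * (x * (x - 1)) / (x * (x - 1) - α) := by
    rw [le_div_iff₀ hgap]; nlinarith
  -- `1 / α' = 1 / α - 1 / (x (x - 1))`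
  refine ⟨α * (x * (x - 1)) / (x * (x - 1) - α), ⟨?_, ?_, by positivity, ?_⟩, by
    push_cast; exact mul_add_one_le_pred_mul (by linarith) hxα hx⟩
  · simp only [Multiset.forall_mem_cons]
    exact ⟨by exact_mod_cast (by linarith : (0 : ℚ) < x - 1), fun y hy => (h.tail y hy).1⟩
  · simp only [Multiset.forall_mem_cons]
    exact ⟨by push_cast; linarith, fun y hy => (h.tail y hy).2.trans hle⟩
  · simp only [Multiset.map_cons, Multiset.sum_cons]
    rw [← hsum]
    push_cast
    field_simp
    ring

lemma exists_erase_head (h : IsKelloggTuple r (c ::ₘ t) α) (hlt : ∀ y ∈ t, y < c)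
    (hc : c * (c - 1) ≤ α) : ∃ α', IsKelloggTuple r t α' ∧ (c : ℚ) ≤ α' + 1 := by
  have hsum := h.sum_inv_cons
  have hα := h.alpha_pos
  have hcq : (0 : ℚ) < c := by exact_mod_cast h.head_pos
  have hle : (c : ℚ) - 1 ≤ c * α / (c + α) := by
    rw [le_div_iff₀ (by positivity)]; nlinarith
  -- `1 / α' = 1 / c + 1 / α`
  refine ⟨c * α / (c + α), ⟨fun y hy => (h.tail y hy).1, fun y hy => ?_, by positivity, ?_⟩,
    by linarith⟩
  · have : (y : ℚ) ≤ c - 1 := by exact_mod_cast Int.le_sub_one_of_lt (hlt y hy)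
    linarith
  · rw [← hsum]
    field_simp
    ring

lemma exists_merge_head (h : IsKelloggTuple r (c ::ₘ c ::ₘ t) α) (hr : 0 < r)
    (hle : ∀ y ∈ t, y ≤ c) (hc : c * (c - 1) ≤ α) :
    ∃ α', IsKelloggTuple r ((c - 1) ::ₘ t) α' ∧ (c : ℚ) ≤ α' := by
  have hsum := h.sum_inv_cons
  have hα := h.alpha_pos
  have hc3 : (3 : ℚ) ≤ c := by exact_mod_cast (by linarith [h.two_mul_lt hr] : 3 ≤ c)
  have hc1 : (0 : ℚ) < c - 1 := by linarith
  have hden : 0 < (c : ℚ) * (c - 1) + α * (c - 2) := by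
    have : (0 : ℚ) < α * (c - 2) := mul_pos hα (by linarith)
    nlinarith
  have hc' : (c : ℚ) ≤ α * (c * (c - 1)) / (c * (c - 1) + α * (c - 2)) := by
    rw [le_div_iff₀ hden]; nlinarith
  have htail := fun y (hy : y ∈ t) => h.tail y (Multiset.mem_cons_of_mem hy)
  -- `1 / α' = 1 / α + 2 / c - 1 / (c - 1)`
  refine ⟨α * (c * (c - 1)) / (c * (c - 1) + α * (c - 2)),
    ⟨?_, ?_, div_pos (by positivity) hden, ?_⟩, hc'⟩
  · simp only [Multiset.forall_mem_cons]
    exact ⟨by exact_mod_cast hc1, fun y hy => (htail y hy).1⟩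
  · simp only [Multiset.forall_mem_cons]
    refine ⟨by push_cast; linarith, fun y hy => ?_⟩
    have : (y : ℚ) ≤ c := by exact_mod_cast hle y hy
    linarith
  · simp only [Multiset.map_cons, Multiset.sum_cons] at hsum ⊢
    rw [← hsum]
    push_cast
    have := hc1.ne'
    field_simp
    ring

lemma prod_mul_le_of_pred_head (h : IsKelloggTuple r (x ::ₘ t) α)
    (hstep : (x : ℚ) * (α + 1) ≤ ((x - 1 : ℤ) : ℚ) * (α' + 1))
    (ih : (((x - 1) ::ₘ t).prod : ℚ) * (α' + 1) ≤ B) :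
    ((x ::ₘ t).prod : ℚ) * (α + 1) ≤ B := by
  have hPt : (0 : ℚ) ≤ t.prod := by
    exact_mod_cast Multiset.prod_nonneg fun y hy => (h.tail y hy).1.le
  rw [Multiset.prod_cons, Int.cast_mul] at ih ⊢
  calc (x * t.prod : ℚ) * (α + 1) = t.prod * (x * (α + 1)) := by ring
    _ ≤ t.prod * ((x - 1 : ℤ) * (α' + 1)) := by gcongr
    _ = ((x - 1 : ℤ) * t.prod) * (α' + 1) := by ring
    _ ≤ B := ih

lemma prod_mul_le_of_erase_head (hr : 1 ≤ r) (h : IsKelloggTuple r (c ::ₘ t) α)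
    (hc : (c : ℚ) ≤ α' + 1) (ih : (t.prod : ℚ) * (α' + 1) ≤ B) :
    ((c ::ₘ t).prod : ℚ) * (α + 1) ≤ B * (r * B + 1) := by
  have hPt : (0 : ℚ) ≤ t.prod := by
    exact_mod_cast Multiset.prod_nonneg fun y hy => (h.tail y hy).1.le
  have hP : (0 : ℚ) ≤ (c ::ₘ t).prod := by exact_mod_cast (Multiset.prod_pos h.pos).le
  have hα : α ≤ r * ((c ::ₘ t).prod : ℤ) :=
    le_mul_of_sum_inv_add_inv_eq (by omega) (Multiset.prod_pos h.pos)
      (fun y hy => Multiset.dvd_prod hy) h.alpha_pos h.sum_inv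
  have hPB : ((c ::ₘ t).prod : ℚ) ≤ B := by
    rw [Multiset.prod_cons, Int.cast_mul]
    calc (c : ℚ) * t.prod ≤ (α' + 1) * t.prod := by gcongr
      _ = t.prod * (α' + 1) := by ring
      _ ≤ B := ih
  have hrq : (0 : ℚ) ≤ r := by exact_mod_cast (by omega : 0 ≤ r)
  calc ((c ::ₘ t).prod : ℚ) * (α + 1)
      ≤ ((c ::ₘ t).prod : ℚ) * (r * ((c ::ₘ t).prod : ℚ) + 1) := by gcongr
    _ ≤ B * (r * B + 1) := mul_mul_add_one_le_mul_mul_add_one hrq hP hPB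

lemma prod_mul_le_of_merge_head (hr : 1 ≤ r) (h : IsKelloggTuple r (c ::ₘ c ::ₘ t) α)
    (hc : (c : ℚ) ≤ α') (ih : (((c - 1) ::ₘ t).prod : ℚ) * (α' + 1) ≤ B) :
    ((c ::ₘ c ::ₘ t).prod : ℚ) * (α + 1) ≤ B * (r * B + 1) := by
  have hc3 : (3 : ℚ) ≤ c := by exact_mod_cast (by linarith [h.two_mul_lt (by omega)] : 3 ≤ c)
  have hPtZ : 0 < t.prod :=
    Multiset.prod_pos fun y hy => (h.tail y (Multiset.mem_cons_of_mem hy)).1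
  have hPt : (1 : ℚ) ≤ t.prod := by exact_mod_cast hPtZ
  have hα : α ≤ r * (c * t.prod : ℤ) := by
    refine le_mul_of_sum_inv_add_inv_eq (by omega) (mul_pos h.head_pos hPtZ) (fun y hy => ?_)
      h.alpha_pos h.sum_inv
    rcases Multiset.mem_cons.1 hy with rfl | hy
    · exact dvd_mul_right _ _
    rcases Multiset.mem_cons.1 hy with rfl | hy
    · exact dvd_mul_right _ _
    · exact (Multiset.dvd_prod hy).mul_left _
  have hQB : ((c : ℚ) ^ 2 - 1) * t.prod ≤ B := by
    rw [Multiset.prod_cons, Int.cast_mul] at ih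
    have : (0 : ℚ) ≤ (c - 1 : ℤ) := by push_cast; linarith
    calc ((c : ℚ) ^ 2 - 1) * t.prod = ((c - 1 : ℤ) * t.prod) * (c + 1) := by push_cast; ring
      _ ≤ ((c - 1 : ℤ) * t.prod) * (α' + 1) := by gcongr
      _ ≤ B := ih
  rw [Int.cast_mul] at hα
  rw [Multiset.prod_cons, Multiset.prod_cons, Int.cast_mul, Int.cast_mul]
  calc (c * (c * t.prod) : ℚ) * (α + 1) = c ^ 2 * t.prod * (α + 1) := by ring
    _ ≤ B * (r * B + 1) :=
      sq_mul_mul_add_one_le (by exact_mod_cast hr) hc3 hPt hQB (by linarith)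

end Steps

theorem prod_mul_le {r : ℤ} {s : Multiset ℤ} {α : ℚ} (hr : 1 ≤ r) (h : IsKelloggTuple r s α) :
    (s.prod : ℚ) * (α + 1) ≤ sylvesterProd r (Multiset.card s + 1) := by
  by_cases hE : ∃ x ∈ s, α < x * (x - 1)
  · obtain ⟨x, hx, hxα⟩ := hE
    obtain ⟨t, rfl⟩ := Multiset.exists_cons_of_mem hx
    obtain ⟨α', h', hstep⟩ := h.exists_pred_head hxα
    have ih := prod_mul_le hr h'
    simp only [Multiset.card_cons] at ih ⊢
    exact h.prod_mul_le_of_pred_head hstep ih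
  push Not at hE
  rcases eq_or_ne s 0 with rfl | hs
  · simp [h.eq_of_zero, sylvesterProd]
  obtain ⟨c, hc, hmax⟩ := Multiset.exists_max_image id hs
  obtain ⟨t, rfl⟩ := Multiset.exists_cons_of_mem hc
  rw [Multiset.card_cons, sylvesterProd_succ]
  by_cases hct : c ∈ t
  · obtain ⟨t, rfl⟩ := Multiset.exists_cons_of_mem hct
    obtain ⟨α', h', hcα'⟩ :=
      h.exists_merge_head (by omega) (fun y hy => hmax y (by simp [hy])) (hE c hc)
    have ih := prod_mul_le hr h'
    simp only [Multiset.card_cons] at ih ⊢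
    exact h.prod_mul_le_of_merge_head hr hcα' ih
  · have hlt : ∀ y ∈ t, y < c := fun y hy =>
      lt_of_le_of_ne (hmax y (Multiset.mem_cons_of_mem hy)) (by rintro rfl; exact hct hy)
    obtain ⟨α', h', hcα'⟩ := h.exists_erase_head hlt (hE c hc)
    exact h.prod_mul_le_of_erase_head hr hcα' (prod_mul_le hr h')
termination_by s.sum.toNat
decreasing_by
  all_goals
    subst_vars
    have hx := h.head_pos
    have ht := h'.sum_nonneg
    simp only [Multiset.sum_cons] at ht ⊢
    omega

theorem le_mul_sylvesterProd {r : ℤ} {s : Multiset ℤ} {α : ℚ} (hr : 1 ≤ r)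
    (h : IsKelloggTuple r s α) : α ≤ r * sylvesterProd r (Multiset.card s) := by
  set U := sylvesterProd r (Multiset.card s)
  have hbound : (s.prod : ℚ) * (α + 1) ≤ U * (r * U + 1) := h.prod_mul_le hr
  have hα : α ≤ r * s.prod := by
    exact_mod_cast le_mul_of_sum_inv_add_inv_eq (by omega) (Multiset.prod_pos h.pos)
      (fun _ => Multiset.dvd_prod) h.alpha_pos h.sum_inv
  have hrq : (1 : ℚ) ≤ r := by exact_mod_cast hr
  have hU : 1 ≤ U := one_le_sylvesterProd (by linarith) _
  have hα0 := h.alpha_pos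
  have hsq : α * (α + 1) ≤ (r * U) * (r * U + 1) := by
    calc α * (α + 1) ≤ r * s.prod * (α + 1) := by gcongr
      _ = r * (s.prod * (α + 1)) := by ring
      _ ≤ r * (U * (r * U + 1)) := by gcongr
      _ = (r * U) * (r * U + 1) := by ring
  by_contra! hlt
  nlinarith [mul_pos (sub_pos.2 hlt) (by positivity : (0 : ℚ) < α + r * U + 1)]

end IsKelloggTuple

/-- **Proposition 3.1, Erdős-type bound.** If positive integers
`p_1, …, p_k` and a positive rational `α ≥ max p_i` satisfy
`∑ 1/p_i + 1/α = 1/r`, then `α ≤ u_{k+1}(r) - 1` and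
`p_1 ⋯ p_k (α + 1) ≤ u_1(r) ⋯ u_{k+1}(r)`, where `u_1(r) = r + 1` and
`u_{n+1}(r) = r u_1(r) ⋯ u_n(r) + 1`. -/
theorem kellogg_type_bound
    (r : ℤ) (hr : 1 ≤ r)
    (u : ℕ → ℤ) (hu1 : u 1 = r + 1)
    (hu : ∀ j, 1 ≤ j → u (j + 1) = r * (∏ i ∈ Finset.Icc 1 j, u i) + 1)
    (k : ℕ) (hk : 1 ≤ k)
    (p : Fin k → ℤ) (hp : ∀ i, 0 < p i)
    (α : ℚ) (hα : 0 < α)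
    (heq : (∑ i, ((p i : ℚ))⁻¹) + α⁻¹ = (r : ℚ)⁻¹)
    (hmax : ∀ i, (p i : ℚ) ≤ α) :
    α ≤ (u (k + 1) : ℚ) - 1 ∧
      (∏ i, (p i : ℚ)) * (α + 1) ≤ ∏ i ∈ Finset.Icc 1 (k + 1), (u i : ℚ) := by
  have h : IsKelloggTuple r (univ.val.map p) α := by
    refine ⟨by simpa using hp, by simpa using hmax, hα, ?_⟩
    rwa [Multiset.map_map]
  have hcard : Multiset.card (univ.val.map p) = k := by simp
  have hprod : ((univ.val.map p).prod : ℚ) = ∏ i, (p i : ℚ) := by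
    rw [Int.cast_multiset_prod, Multiset.map_map]; rfl
  refine ⟨?_, ?_⟩
  · have := h.le_mul_sylvesterProd hr
    rw [hcard, ← prod_Icc_eq_sylvesterProd hu1 hu] at this
    rw [hu k hk]
    push_cast
    linarith
  · have := h.prod_mul_le hr
    rwa [hcard, hprod, ← prod_Icc_eq_sylvesterProd hu1 hu] at this
end

section
/- Let s be a nonzero integer, n ≥ 2, and set M_n* = u_1·u_2⋯u_n, where u_i is Sylvester's sequence. If gcd(s, M_n*) = 1, then the equation 1/x_1 + ⋯ + 1/x_n = s/(x_1·x_2⋯x_n) has infinitely many solutions in nonzero integers (x_1, …, x_n) satisfying min_i |x_i| ≥ 2 and gcd(x_1·x_2⋯x_n, s) = 1. -/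
/-!
Iterate `x ↦ x (x - 1) + 1`, the recursion of Sylvester's sequence, from a seed `a`:
`a_0 = a, a_1, a_2, …` (the seed `2` gives `a_k = u_{k+1}`). Since `a_{k+1} - 1 = a_k (a_k - 1)`,
the reciprocals telescope, `1/(1 - a) + 1/a_0 + ⋯ + 1/a_{m-1} = 1/P` where
`P = (1 - a) a_0 ⋯ a_{m-1} = 1 - a_m`, and `1/P + 1/(s - P) = s / (P (s - P))` shows that
`(1 - a, a_0, …, a_{m-1}, s - P)` is a solution with `n = m + 2`.
For `a ≡ 2 (mod s)` we get `a_k ≡ u_{k+1}` and `1 - a ≡ -1`, so `P`, and with it `s - P`, is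
coprime to `s` when `s` is coprime to the `u_k`. Seeds `a ≥ |s| + 3` in this residue class keep
every entry of absolute value at least `2` and give distinct solutions.
-/

open Finset

section

variable {R : Type*} [CommRing R]

def sylvesterSeq (a : R) : ℕ → R
  | 0 => a
  | k + 1 => sylvesterSeq a k * (sylvesterSeq a k - 1) + 1

theorem sylvesterSeq_sub_one (a : R) (k : ℕ) :
    sylvesterSeq a k - 1 = (a - 1) * ∏ i ∈ range k, sylvesterSeq a i := by
  induction k with
  | zero => simp [sylvesterSeq]
  | succ k ih => rw [prod_range_succ, ← mul_assoc, ← ih, sylvesterSeq]; ring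

theorem one_sub_mul_prod_sylvesterSeq (a : R) (m : ℕ) :
    (1 - a) * ∏ i ∈ range m, sylvesterSeq a i = 1 - sylvesterSeq a m := by
  linear_combination sylvesterSeq_sub_one a m

theorem map_sylvesterSeq {S : Type*} [CommRing S] (f : R →+* S) (a : R) (k : ℕ) :
    f (sylvesterSeq a k) = sylvesterSeq (f a) k := by
  induction k with
  | zero => rfl
  | succ k ih => simp [sylvesterSeq, ih]

theorem monotone_sylvesterSeq [LinearOrder R] [IsOrderedRing R] (a : R) :
    Monotone (sylvesterSeq a) :=
  monotone_nat_of_le_succ fun k => by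
    rw [sylvesterSeq]; linear_combination sq_nonneg (sylvesterSeq a k - 1)

theorem sylvesterSeq_modEq {s a b : ℤ} (h : a ≡ b [ZMOD s]) (k : ℕ) :
    sylvesterSeq a k ≡ sylvesterSeq b k [ZMOD s] := by
  induction k with
  | zero => exact h
  | succ k ih => exact (ih.mul (ih.sub rfl)).add rfl

theorem sum_range_inv_sylvesterSeq {K : Type*} [Field K] {a : K} (ha : a ≠ 1) {k : ℕ}
    (h : ∀ i < k, sylvesterSeq a i ≠ 0) :
    ∑ i ∈ range k, (sylvesterSeq a i)⁻¹ = (a - 1)⁻¹ - (sylvesterSeq a k - 1)⁻¹ := by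
  induction k with
  | zero => simp [sylvesterSeq]
  | succ k ih =>
    have hk : sylvesterSeq a k ≠ 0 := h k k.lt_succ_self
    have hk₁ : sylvesterSeq a k - 1 ≠ 0 := by
      rw [sylvesterSeq_sub_one]
      exact mul_ne_zero (sub_ne_zero.mpr ha)
        (prod_ne_zero_iff.mpr fun i hi => h i ((mem_range.mp hi).trans k.lt_succ_self))
    rw [sum_range_succ, ih fun i hi => h i (by omega), sylvesterSeq]
    field_simp
    ring

theorem prod_Icc_eq_prod_range_sylvesterSeq_two {u : ℕ → R} (hu1 : u 1 = 2)
    (hu : ∀ k, 1 ≤ k → u (k + 1) = ∏ i ∈ Icc 1 k, u i + 1) (k : ℕ) :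
    ∏ i ∈ Icc 1 k, u i = ∏ i ∈ range k, sylvesterSeq 2 i := by
  induction k with
  | zero => simp
  | succ k ih =>
    have hu' : u (k + 1) = ∏ i ∈ Icc 1 k, u i + 1 := by
      rcases k with _ | k
      · simp [hu1, one_add_one_eq_two]
      · exact hu _ (Nat.succ_pos k)
    rw [prod_Icc_succ_top (by omega), prod_range_succ, ih, hu', ih]
    congr 1
    linear_combination -sylvesterSeq_sub_one (2 : R) k

theorem Int.ModEq.isCoprime_iff {s a b : ℤ} (h : a ≡ b [ZMOD s]) :
    IsCoprime s a ↔ IsCoprime s b := by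
  obtain ⟨c, hc⟩ := h.dvd
  rw [show b = a + s * c by linarith, IsCoprime.add_mul_left_right_iff]

def sylvesterTuple (s a : R) (m : ℕ) : Fin (m + 2) → R :=
  Fin.snoc (Fin.cons (1 - a) fun i : Fin m => sylvesterSeq a i) (s - (1 - sylvesterSeq a m))

section sylvesterTuple

variable (s a : R) (m : ℕ)

theorem sylvesterTuple_zero : sylvesterTuple s a m 0 = 1 - a := rfl

theorem sylvesterTuple_castSucc_succ (i : Fin m) :
    sylvesterTuple s a m i.succ.castSucc = sylvesterSeq a i := by
  simp only [sylvesterTuple, Fin.snoc_castSucc, Fin.cons_succ]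

theorem sylvesterTuple_last :
    sylvesterTuple s a m (Fin.last _) = s - (1 - sylvesterSeq a m) := by
  simp only [sylvesterTuple, Fin.snoc_last]

theorem prod_sylvesterTuple :
    ∏ i, sylvesterTuple s a m i = (1 - sylvesterSeq a m) * (s - (1 - sylvesterSeq a m)) := by
  simp [sylvesterTuple, Fin.prod_univ_eq_prod_range (fun i => sylvesterSeq a i),
    one_sub_mul_prod_sylvesterSeq]

theorem map_sylvesterTuple {S : Type*} [CommRing S] (f : R →+* S) (i : Fin (m + 2)) :
    f (sylvesterTuple s a m i) = sylvesterTuple (f s) (f a) m i := by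
  change (f ∘ _) i = _
  rw [sylvesterTuple, sylvesterTuple, Fin.comp_snoc, Fin.comp_cons]
  simp [Function.comp_def, map_sylvesterSeq]

end sylvesterTuple

theorem sylvesterTuple_injective (s : R) (m : ℕ) :
    Function.Injective fun a : R => sylvesterTuple s a m :=
  fun a b h => by simpa [sylvesterTuple_zero] using congrFun h 0

theorem isCoprime_prod_sylvesterTuple {s a : R} {m : ℕ} (h₀ : IsCoprime s (1 - a))
    (h : ∀ i < m, IsCoprime s (sylvesterSeq a i)) :
    IsCoprime s (∏ i, sylvesterTuple s a m i) := by
  have hP : IsCoprime s (1 - sylvesterSeq a m) := by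
    rw [← one_sub_mul_prod_sylvesterSeq]
    exact h₀.mul_right (IsCoprime.prod_right fun i hi => h i (mem_range.mp hi))
  rw [prod_sylvesterTuple]
  exact hP.mul_right (by simpa using (IsCoprime.mul_sub_left_right_iff (z := 1)).mpr hP)

theorem sum_inv_sylvesterTuple {K : Type*} [Field K] {s a : K} {m : ℕ}
    (h : ∀ i, sylvesterTuple s a m i ≠ 0) :
    ∑ i, (sylvesterTuple s a m i)⁻¹ = s / ∏ i, sylvesterTuple s a m i := by
  have h₀ : 1 - a ≠ 0 := h 0
  have hseq : ∀ i < m, sylvesterSeq a i ≠ 0 := fun i hi => by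
    simpa only [sylvesterTuple_castSucc_succ] using h (Fin.succ ⟨i, hi⟩).castSucc
  have hlast : s - (1 - sylvesterSeq a m) ≠ 0 := by
    simpa only [sylvesterTuple_last] using h (Fin.last _)
  have hP : 1 - sylvesterSeq a m ≠ 0 := by
    rw [← one_sub_mul_prod_sylvesterSeq]
    exact mul_ne_zero h₀ (prod_ne_zero_iff.mpr fun i hi => hseq i (mem_range.mp hi))
  rw [prod_sylvesterTuple, Fin.sum_univ_castSucc, Fin.sum_univ_succ]
  simp only [Fin.castSucc_zero, sylvesterTuple_zero, sylvesterTuple_castSucc_succ,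
    sylvesterTuple_last]
  rw [Fin.sum_univ_eq_sum_range (fun i => (sylvesterSeq a i)⁻¹),
    sum_range_inv_sylvesterSeq (sub_ne_zero.mp h₀).symm hseq, ← neg_sub 1 a,
    ← neg_sub 1 (sylvesterSeq a m), inv_neg, inv_neg]
  field_simp
  ring

theorem two_le_abs_sylvesterTuple [LinearOrder R] [IsStrictOrderedRing R] {s a : R}
    (ha : |s| + 3 ≤ a) (m : ℕ) (i : Fin (m + 2)) : 2 ≤ |sylvesterTuple s a m i| := by
  have hmono (k : ℕ) : a ≤ sylvesterSeq a k := monotone_sylvesterSeq a (Nat.zero_le k)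
  have hs : 0 ≤ s + |s| := neg_le_iff_add_nonneg.mp (neg_abs_le s)
  induction i using Fin.lastCases with
  | last =>
    rw [sylvesterTuple_last]
    exact le_abs.mpr (Or.inl (by linarith [hmono m]))
  | cast i =>
    induction i using Fin.cases with
    | zero =>
      rw [Fin.castSucc_zero, sylvesterTuple_zero]
      exact le_abs.mpr (Or.inr (by linarith [abs_nonneg s]))
    | succ j =>
      rw [sylvesterTuple_castSucc_succ]
      exact le_abs.mpr (Or.inl (by linarith [hmono j, abs_nonneg s]))

theorem sum_inv_intCast_sylvesterTuple {K : Type*} [Field K] [CharZero K] {s a : ℤ} {m : ℕ}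
    (h : ∀ i, sylvesterTuple s a m i ≠ 0) :
    ∑ i, ((sylvesterTuple s a m i : ℤ) : K)⁻¹ =
      (s : K) / ∏ i, ((sylvesterTuple s a m i : ℤ) : K) := by
  have hcast (i) : ((sylvesterTuple s a m i : ℤ) : K) = sylvesterTuple (s : K) (a : K) m i := by
    simpa using map_sylvesterTuple s a m (Int.castRingHom K) i
  simp only [hcast]
  exact sum_inv_sylvesterTuple fun i => by rw [← hcast]; exact_mod_cast h i

theorem gcd_prod_sylvesterTuple_eq_one {s a : ℤ} {m : ℕ} (ha : a ≡ 2 [ZMOD s])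
    (h : ∀ i < m, IsCoprime s (sylvesterSeq 2 i)) :
    Int.gcd (∏ i, sylvesterTuple s a m i) s = 1 := by
  rw [Int.gcd_comm, ← Int.isCoprime_iff_gcd_eq_one]
  refine isCoprime_prod_sylvesterTuple ?_ fun i hi => ?_
  · exact ((Int.ModEq.refl 1).sub ha).isCoprime_iff.mpr
      (by simpa using isCoprime_one_right.neg_right)
  · exact (sylvesterSeq_modEq ha i).isCoprime_iff.mpr (h i hi)

end

/-- **Theorem 4.2(2).** If `gcd(s, u_1 u_2 ⋯ u_n) = 1` where
`u` is Sylvester's sequence, then `1/x_1 + ⋯ + 1/x_n = s/(x_1 ⋯ x_n)` has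
infinitely many solutions in nonzero integers with all `|x_i| ≥ 2` and
`gcd(x_1 ⋯ x_n, s) = 1`. -/
theorem solutions_m_zero_sylvester_modulus
    (s : ℤ) (hs : s ≠ 0) (n : ℕ) (hn : 2 ≤ n)
    (u : ℕ → ℤ) (hu1 : u 1 = 2)
    (hu : ∀ k, 1 ≤ k → u (k + 1) = (∏ i ∈ Finset.Icc 1 k, u i) + 1)
    (hgcd : Int.gcd s (∏ i ∈ Finset.Icc 1 n, u i) = 1) :
    {x : Fin n → ℤ |
        (∀ i, 2 ≤ |x i|) ∧
        (∑ i, ((x i : ℚ))⁻¹) = (s : ℚ) / (∏ i, (x i : ℚ)) ∧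
        Int.gcd (∏ i, x i) s = 1}.Infinite := by
  obtain ⟨m, rfl⟩ : ∃ m, n = m + 2 := ⟨n - 2, by omega⟩
  have hsylv : ∀ i < m, IsCoprime s (sylvesterSeq 2 i) := by
    rw [← Int.isCoprime_iff_gcd_eq_one, prod_Icc_eq_prod_range_sylvesterSeq_two hu1 hu] at hgcd
    exact fun i hi => IsCoprime.prod_right_iff.mp hgcd i (mem_range.mpr (by omega))
  set seed : ℕ → ℤ := fun k => 2 + |s| * (k + 2)
  have hseed_inj : Function.Injective seed := fun k l h => by simpa [seed, hs] using h
  have hseed_ge (k : ℕ) : |s| + 3 ≤ seed k := by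
    simp only [seed]; nlinarith [Int.one_le_abs hs, k.cast_nonneg (α := ℤ)]
  have hseed_mod (k : ℕ) : seed k ≡ 2 [ZMOD s] := Int.modEq_iff_dvd.mpr <| by
    rw [show 2 - seed k = -(|s| * (k + 2)) by ring]
    exact dvd_neg.mpr ((self_dvd_abs s).mul_right _)
  refine Set.infinite_of_injective_forall_mem ((sylvesterTuple_injective s m).comp hseed_inj)
    fun k => ?_
  have hbig := two_le_abs_sylvesterTuple (hseed_ge k) m
  refine ⟨hbig, sum_inv_intCast_sylvesterTuple fun i h0 => ?_,
    gcd_prod_sylvesterTuple_eq_one (hseed_mod k) hsylv⟩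
  simpa [h0] using hbig i
end
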